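/- arXiv:2102.09062 — 2 statements merged into one kernel-verified Lean document; each statement's English description precedes it below -/
import Mathlib

section
/- Let A be a commutative noetherian ring, G a locally profinite group, and (π,V) a smooth A[G]-module which is admissible (for every compact open subgroup K of G the module of K-fixed vectors V^K is finitely generated over A) and G-finite (finitely generated as an A[G]-module). Then the algebra End_{A[G]}(V) of A[G]-module endomorphisms of V is a finitely generated A-module. -/
/-!
By smoothness and van Dantzig's theorem, the finitely many `A[G]`-generators of `V` are all fixed
by one compact open subgroup `K`. An intertwiner is determined by its values on these generators,
and it maps `V^K` into itself, so `End_{A[G]}(V)` embeds `A`-linearly into a finite power of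
`V^K`, which is a finite module over the noetherian ring `A`.
-/

set_option linter.unusedVariables false
set_option linter.unnecessarySimpa false
set_option maxHeartbeats 1000000
set_option synthInstance.maxHeartbeats 2000000

noncomputable section
open scoped TensorProduct Classical

namespace Doubling

variable (A : Type) [CommRing A]

private theorem algMemAux (a : A) : ((algebraMap A (LaurentSeries A)) a).support.Finite := by
  have h : (algebraMap A (LaurentSeries A)) a
      = HahnSeries.ofPowerSeries ℤ A ((algebraMap A (PowerSeries A)) a) := rfl
  rw [h, PowerSeries.algebraMap_apply]
  simp only [Algebra.algebraMap_self, RingHom.id_apply]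
  rw [HahnSeries.ofPowerSeries_C]
  apply Set.Finite.subset (Set.finite_singleton (0:ℤ))
  rw [HahnSeries.C_apply]
  exact HahnSeries.support_single_subset

/-- The Laurent polynomial ring `A[X,X⁻¹]`, realized as the subalgebra of
finitely supported elements of the Laurent series ring `A[[X]][X⁻¹] = LaurentSeries A`. -/
def LPol : Subalgebra A (LaurentSeries A) where
  carrier := {x | x.support.Finite}
  mul_mem' {x y} hx hy :=
    Set.Finite.subset (hx.add hy) HahnSeries.support_mul_subset
  add_mem' {x y} hx hy :=
    Set.Finite.subset (hx.union hy) (HahnSeries.support_add_subset x y)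
  algebraMap_mem' a := algMemAux A a

/-- Membership in the multiplicative set `S ⊆ A[X,X⁻¹]` of Laurent polynomials
whose leading and trailing coefficients are units of `A`. -/
def memS (x : LaurentSeries A) : Prop :=
  x.support.Finite ∧ ∃ n m : ℤ, IsUnit (x.coeff n) ∧ IsUnit (x.coeff m) ∧
    ∀ k : ℤ, (k < n ∨ m < k) → x.coeff k = 0

/-- Membership in the localization `S⁻¹A[X,X⁻¹]`, regarded inside `A[[X]][X⁻¹]`
(each element of `S` is invertible in `A[[X]][X⁻¹]`, so the localization embeds). -/
def memSinv (x : LaurentSeries A) : Prop :=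
  ∃ q : LaurentSeries A, memS A q ∧ (q * x).support.Finite

/-- The involution `X ↦ X⁻¹` of `A[X,X⁻¹]` (extended by `0` to series with
infinite support). -/
def linv (x : LaurentSeries A) : LaurentSeries A :=
  if hx : x.support.Finite then ∑ k ∈ hx.toFinset, HahnSeries.single (-k) (x.coeff k) else 0

variable {A}
variable {G : Type} [Group G] [TopologicalSpace G]
variable {V : Type} [AddCommGroup V] [Module A V]

/-- The smooth vectors of a representation: vectors with open stabilizer subgroup. -/
def smoothVectors (ρ : Representation A G V) : Submodule A V where
  carrier := {v | ∃ K : Subgroup G, IsOpen (K : Set G) ∧ ∀ k ∈ K, ρ k v = v}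
  zero_mem' := ⟨⊤, by simpa using isOpen_univ, fun k _ => map_zero _⟩
  add_mem' := by
    rintro v w ⟨K₁, hK₁, hv⟩ ⟨K₂, hK₂, hw⟩
    exact ⟨K₁ ⊓ K₂, by simpa [Subgroup.coe_inf] using hK₁.inter hK₂,
      fun k hk => by rw [map_add, hv k hk.1, hw k hk.2]⟩
  smul_mem' := by
    rintro c v ⟨K, hK, hv⟩
    exact ⟨K, hK, fun k hk => by rw [map_smul, hv k hk]⟩

/-- A representation is smooth if every vector is smooth. -/
def IsSmoothRep (ρ : Representation A G V) : Prop := ∀ v : V, v ∈ smoothVectors ρ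

/-- The `K`-fixed vectors of a representation. -/
def fixedPts (ρ : Representation A G V) (K : Subgroup G) : Submodule A V where
  carrier := {v | ∀ k ∈ K, ρ k v = v}
  zero_mem' := fun k _ => map_zero _
  add_mem' := fun hv hw k hk => by rw [map_add, hv k hk, hw k hk]
  smul_mem' := fun c v hv k hk => by rw [map_smul, hv k hk]

/-- Admissibility: for every compact open subgroup `K` the module of `K`-fixed
vectors is finitely generated over `A`. -/
def IsAdmissibleRep (ρ : Representation A G V) : Prop :=
  ∀ K : Subgroup G, IsOpen (K : Set G) → IsCompact (K : Set G) →
    Module.Finite A (fixedPts ρ K)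

/-- `G`-finiteness: `V` is finitely generated as an `A[G]`-module. -/
def IsGFinite (ρ : Representation A G V) : Prop :=
  ∃ s : Finset V, Submodule.span A {w | ∃ g : G, ∃ v ∈ s, w = ρ g v} = ⊤

/-- The contragredient `Ṽ`: smooth vectors of the dual representation. -/
def contragredient (ρ : Representation A G V) : Submodule A (Module.Dual A V) :=
  smoothVectors ρ.dual

/-- The matrix coefficient `g ↦ λ(π(g)v)`. -/
def matCoeffFn (ρ : Representation A G V) (v : V) (l : Module.Dual A V) : G → A :=
  fun g => l (ρ g v)

/-- The module `M(π)` of matrix coefficients of a representation. -/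
def MatCoef (ρ : Representation A G V) : Submodule A (G → A) :=
  Submodule.span A {φ | ∃ v : V, ∃ l ∈ contragredient ρ, φ = matCoeffFn ρ v l}

/-- The action of `G × G` on functions on `G`: `((g₁,g₂)·φ)(g) = φ(g₂⁻¹ g g₁)`. -/
def doubleAct : Representation A (G × G) (G → A) where
  toFun p :=
    { toFun := fun φ g => φ (p.2⁻¹ * g * p.1)
      map_add' := fun φ ψ => rfl
      map_smul' := fun c φ => rfl }
  map_one' := by ext φ g; simp
  map_mul' p q := by
    ext φ g
    simp [Module.End.mul_apply, mul_assoc]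


/-- The algebra of `A[G]`-module endomorphisms of `V` (as an `A`-module). -/
def equivEnd (ρ : Representation A G V) : Submodule A (Module.End A V) where
  carrier := {φ | ∀ g : G, φ ∘ₗ (ρ g) = (ρ g) ∘ₗ φ}
  zero_mem' := by intro g; ext v; simp
  add_mem' := by
    intro φ ψ hφ hψ g
    ext v
    simp [LinearMap.add_comp, LinearMap.comp_add, hφ g, hψ g]
  smul_mem' := by
    intro c φ hφ g
    ext v
    simp [LinearMap.smul_comp, LinearMap.comp_smul, hφ g]

section OpenSubgroups

open scoped Pointwise
open Filter Topology

variable [IsTopologicalGroup G]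

/-- The subgroup generated by a symmetric neighbourhood `V` of `1` with `W * V ⊆ W` stays in `W`. -/
theorem exists_openSubgroup_subset_of_isCompact_of_isOpen {W : Set G} (hWc : IsCompact W)
    (hWo : IsOpen W) (hW1 : (1 : G) ∈ W) : ∃ H : OpenSubgroup G, (H : Set G) ⊆ W := by
  obtain ⟨V, hV, hWV⟩ := compact_open_separated_mul_right hWc hWo subset_rfl
  have hmul : ∀ w ∈ W, ∀ v ∈ V, w * v ∈ W := fun w hw v hv => hWV (Set.mul_mem_mul hw hv)
  let H := Subgroup.closure (V ∩ V⁻¹)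
  have hHnhds : (H : Set G) ∈ 𝓝 (1 : G) :=
    mem_of_superset (inter_mem hV (inv_mem_nhds_one G hV)) Subgroup.subset_closure
  have hstable : ∀ g ∈ H, ∀ w ∈ W, w * g ∈ W := by
    intro g hg
    induction hg using Subgroup.closure_induction'' with
    | mem x hx => exact fun w hw => hmul w hw x hx.1
    | inv_mem x hx => exact fun w hw => hmul w hw x⁻¹ hx.2
    | one => exact fun w hw => by simpa using hw
    | mul x y _ _ hx hy => exact fun w hw => by simpa [mul_assoc] using hy _ (hx w hw)
  exact ⟨⟨H, H.isOpen_of_mem_nhds hHnhds⟩, fun g hg => by simpa using hstable g hg 1 hW1⟩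

/-- Van Dantzig's theorem. -/
theorem exists_compact_openSubgroup_subset [LocallyCompactSpace G] [TotallyDisconnectedSpace G]
    [T2Space G] {U : Set G} (hU : U ∈ 𝓝 (1 : G)) :
    ∃ H : OpenSubgroup G, IsCompact (H : Set G) ∧ (H : Set G) ⊆ U := by
  obtain ⟨C, hC, hCU, hCc⟩ := local_compact_nhds hU
  obtain ⟨W, hW, hW1, hWC⟩ := loc_compact_Haus_tot_disc_of_zero_dim.mem_nhds_iff.mp hC
  have hWc : IsCompact W := hCc.of_isClosed_subset hW.isClosed hWC
  obtain ⟨H, hHW⟩ := exists_openSubgroup_subset_of_isCompact_of_isOpen hWc hW.isOpen hW1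
  exact ⟨H, hWc.of_isClosed_subset H.isClosed hHW, hHW.trans (hWC.trans hCU)⟩

end OpenSubgroups

open Topology in
theorem exists_compact_openSubgroup_forall_mem_fixedPts [IsTopologicalGroup G] [LocallyCompactSpace G]
    [TotallyDisconnectedSpace G] [T2Space G] {ρ : Representation A G V} (hρ : IsSmoothRep ρ)
    (s : Finset V) :
    ∃ K : OpenSubgroup G, IsCompact (K : Set G) ∧ ∀ v ∈ s, v ∈ fixedPts ρ K := by
  choose K hKopen hKfix using hρ
  have hnhds : (⋂ v ∈ s, (K v : Set G)) ∈ 𝓝 (1 : G) :=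
    (Filter.biInter_finset_mem s).mpr fun v _ => (hKopen v).mem_nhds (K v).one_mem
  obtain ⟨H, hHc, hHsub⟩ := exists_compact_openSubgroup_subset hnhds
  refine ⟨H, hHc, fun v hv k hk => hKfix v k ?_⟩
  exact Set.mem_iInter₂.mp (hHsub hk) v hv

omit [TopologicalSpace G] in
theorem apply_comm_of_mem_equivEnd {ρ : Representation A G V} {φ : Module.End A V}
    (hφ : φ ∈ equivEnd ρ) (g : G) (v : V) : φ (ρ g v) = ρ g (φ v) :=
  LinearMap.congr_fun (hφ g) v

omit [TopologicalSpace G] in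
theorem apply_mem_fixedPts_of_mem_equivEnd {ρ : Representation A G V} {K : Subgroup G}
    {φ : Module.End A V} (hφ : φ ∈ equivEnd ρ) {v : V} (hv : v ∈ fixedPts ρ K) :
    φ v ∈ fixedPts ρ K := fun k hk => by
  rw [← apply_comm_of_mem_equivEnd hφ, hv k hk]

omit [TopologicalSpace G] in
theorem eq_of_mem_equivEnd_of_eqOn {ρ : Representation A G V} {s : Set V}
    (hs : Submodule.span A {w | ∃ g : G, ∃ v ∈ s, w = ρ g v} = ⊤) {φ ψ : Module.End A V}
    (hφ : φ ∈ equivEnd ρ) (hψ : ψ ∈ equivEnd ρ) (hφψ : Set.EqOn φ ψ s) : φ = ψ := by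
  refine LinearMap.ext_on hs ?_
  rintro _ ⟨g, v, hv, rfl⟩
  rw [apply_comm_of_mem_equivEnd hφ, apply_comm_of_mem_equivEnd hψ, hφψ hv]

omit [TopologicalSpace G] in
def equivEndRestrict (ρ : Representation A G V) (K : Subgroup G) (s : Set V)
    (hs : ∀ v ∈ s, v ∈ fixedPts ρ K) : equivEnd ρ →ₗ[A] (s → fixedPts ρ K) where
  toFun φ v := ⟨φ.1 v, apply_mem_fixedPts_of_mem_equivEnd φ.2 (hs v v.2)⟩
  map_add' _ _ := rfl
  map_smul' _ _ := rfl

omit [TopologicalSpace G] in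
theorem equivEndRestrict_injective {ρ : Representation A G V} {K : Subgroup G} {s : Set V}
    (hs : ∀ v ∈ s, v ∈ fixedPts ρ K)
    (hspan : Submodule.span A {w | ∃ g : G, ∃ v ∈ s, w = ρ g v} = ⊤) :
    Function.Injective (equivEndRestrict ρ K s hs) := fun φ ψ h =>
  Subtype.ext <| eq_of_mem_equivEnd_of_eqOn hspan φ.2 ψ.2 fun v hv =>
    congrArg Subtype.val (congrFun h ⟨v, hv⟩)

/-- **Statement 9.**  Let `A` be a commutative noetherian ring, `G` a locally
profinite group and `(π,V)` a smooth, admissible, `G`-finite `A[G]`-module.  Then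
`End_{A[G]}(V)` is a finitely generated `A`-module. -/
theorem statement9
    [IsNoetherianRing A]
    [IsTopologicalGroup G] [LocallyCompactSpace G] [TotallyDisconnectedSpace G] [T2Space G]
    (ρ : Representation A G V)
    (hsmooth : IsSmoothRep ρ)
    (hadm : IsAdmissibleRep ρ)
    (hfin : IsGFinite ρ) :
    Module.Finite A ↥(equivEnd ρ) := by
  obtain ⟨s, hspan⟩ := hfin
  obtain ⟨K, hKc, hsK⟩ := exists_compact_openSubgroup_forall_mem_fixedPts hsmooth s
  have : Module.Finite A (fixedPts ρ K) := hadm K K.isOpen hKc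
  exact Module.Finite.of_injective _ (equivEndRestrict_injective (s := ↑s) hsK hspan)

end Doubling
end
end

section
/- Let G be the F-points of a reductive algebraic group over F, let P = MN be a parabolic subgroup of G with Levi M and unipotent radical N, and let (π,V) be a smooth A[G]-module that is finitely generated as an A[G]-module. Then the N-coinvariants V_N, with its natural M-action, is finitely generated as an A[M]-module. -/
/-! A finite generating set `s₀` of `V` over `A[G]` and the decomposition `G = M N C` with `C`
compact reduce the claim to two observations. First, `N` acts trivially on `V_N`, so the image
of `π(mnc)v` in `V_N` is `m` applied to the image of `π(c)v`. Second, `v` is fixed by an open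
subgroup `K`, and finitely many translates `gK` cover `C`, so `π(C)v` is a finite set. The images
of the vectors `π(c)v`, `v ∈ s₀`, `c ∈ C`, therefore generate `V_N` over `A[M]`. -/

noncomputable section
open scoped TensorProduct Classical

namespace Doubling

variable (A : Type) [CommRing A]

variable {A}
variable {G : Type} [Group G] [TopologicalSpace G]
variable {V : Type} [AddCommGroup V] [Module A V]

/-- The submodule of `V` generated by `π(n)v - v` for `n ∈ N`; the module of
`N`-coinvariants is the quotient `V_N = V / coinvSub ρ N`. -/
def coinvSub (ρ : Representation A G V) (N : Subgroup G) : Submodule A V :=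
  Submodule.span A {x | ∃ n ∈ N, ∃ v : V, x = ρ n v - v}

theorem exists_finset_apply_eq_of_isCompact [IsTopologicalGroup G] {ρ : Representation A G V}
    {v : V} (hv : v ∈ smoothVectors ρ) {C : Set G} (hC : IsCompact C) :
    ∃ T : Finset G, ∀ c ∈ C, ∃ t ∈ T, ρ c v = ρ t v := by
  obtain ⟨K, hK, hKv⟩ := hv
  obtain ⟨T, hCT⟩ := compact_covered_by_mul_left_translates hC
    (by rw [hK.interior_eq]; exact ⟨1, K.one_mem⟩)
  refine ⟨T.image (·⁻¹), fun c hc => ?_⟩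
  obtain ⟨g, hg, hgc⟩ := Set.mem_iUnion₂.1 (hCT hc)
  refine ⟨g⁻¹, Finset.mem_image_of_mem _ hg, ?_⟩
  calc ρ c v = ρ g⁻¹ (ρ (g * c) v) := by
        rw [← Module.End.mul_apply, ← map_mul, inv_mul_cancel_left]
    _ = ρ g⁻¹ v := by rw [hKv _ hgc]

theorem mk_apply_eq_of_mem {G : Type} [Group G] (ρ : Representation A G V) {N : Subgroup G}
    {n : G} (hn : n ∈ N) (v : V) :
    (Submodule.Quotient.mk (ρ n v) : V ⧸ coinvSub ρ N) = Submodule.Quotient.mk v :=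
  (Submodule.Quotient.eq _).2 (Submodule.subset_span ⟨n, hn, v, rfl⟩)

theorem mk_apply_mul_of_mem {G : Type} [Group G] (ρ : Representation A G V) {N : Subgroup G}
    {m n : G} (hm : coinvSub ρ N ≤ (coinvSub ρ N).comap (ρ m)) (hn : n ∈ N) (v : V) :
    (Submodule.Quotient.mk (ρ (m * n) v) : V ⧸ coinvSub ρ N) =
      Submodule.mapQ _ _ (ρ m) hm (Submodule.Quotient.mk v) := by
  rw [map_mul, Module.End.mul_apply, ← mk_apply_eq_of_mem ρ hn v, Submodule.mapQ_apply]

theorem statement10_general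
    [IsTopologicalGroup G]
    (ρ : Representation A G V)
    (P M N : Subgroup G)
    (hdecomp : ∀ p ∈ P, ∃ m ∈ M, ∃ n ∈ N, p = m * n)
    (hcpt : ∃ C : Set G, IsCompact C ∧ ∀ g : G, ∃ p ∈ P, ∃ c ∈ C, g = p * c)
    (hsmooth : IsSmoothRep ρ)
    (hfin : IsGFinite ρ)
    (hstab : ∀ m : G, m ∈ M → coinvSub ρ N ≤ (coinvSub ρ N).comap (ρ m)) :
    ∃ s : Finset (V ⧸ coinvSub ρ N),
      Submodule.span A {w : V ⧸ coinvSub ρ N | ∃ m : G, ∃ hm : m ∈ M, ∃ x ∈ s,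
        w = Submodule.mapQ (coinvSub ρ N) (coinvSub ρ N) (ρ m) (hstab m hm) x} = ⊤ := by
  obtain ⟨s₀, hs₀⟩ := hfin
  obtain ⟨C, hC, hPC⟩ := hcpt
  choose T hT using fun v => exists_finset_apply_eq_of_isCompact (hsmooth v) hC
  refine ⟨s₀.biUnion fun v => (T v).image fun t => Submodule.Quotient.mk (ρ t v), ?_⟩
  rw [eq_top_iff, ← Submodule.range_mkQ, ← Submodule.map_top, ← hs₀, Submodule.map_span,
    Submodule.span_le]
  rintro _ ⟨_, ⟨g, v, hv, rfl⟩, rfl⟩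
  obtain ⟨p, hp, c, hc, rfl⟩ := hPC g
  obtain ⟨m, hm, n, hn, rfl⟩ := hdecomp p hp
  obtain ⟨t, ht, hct⟩ := hT v c hc
  refine Submodule.subset_span
    ⟨m, hm, _, Finset.mem_biUnion.2 ⟨v, hv, Finset.mem_image_of_mem _ ht⟩, ?_⟩
  rw [Submodule.mkQ_apply, map_mul, Module.End.mul_apply, hct, mk_apply_mul_of_mem ρ _ hn]

/-- **Statement 10.**  Let `G` be (the `F`-points of) a reductive `p`-adic group,
`P = MN` a parabolic subgroup of `G` (so `N ⊴ P`, every element of `P` is a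
product `mn`, and `P\G` is compact), and `(π,V)` a smooth `A[G]`-module that is
finitely generated over `A[G]`.  Then the `N`-coinvariants `V_N`, with its
natural `M`-action (induced via `Submodule.mapQ`), is finitely generated as an
`A[M]`-module. -/
theorem statement10
    [IsTopologicalGroup G] [LocallyCompactSpace G] [TotallyDisconnectedSpace G] [T2Space G]
    (ρ : Representation A G V)
    (P M N : Subgroup G)
    (hMP : M ≤ P) (hNP : N ≤ P)
    (hnorm : ∀ p ∈ P, ∀ n ∈ N, p * n * p⁻¹ ∈ N)
    (hdecomp : ∀ p ∈ P, ∃ m ∈ M, ∃ n ∈ N, p = m * n)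
    (hcpt : ∃ C : Set G, IsCompact C ∧ ∀ g : G, ∃ p ∈ P, ∃ c ∈ C, g = p * c)
    (hsmooth : IsSmoothRep ρ)
    (hfin : IsGFinite ρ)
    (hstab : ∀ m : G, m ∈ M → coinvSub ρ N ≤ (coinvSub ρ N).comap (ρ m)) :
    ∃ s : Finset (V ⧸ coinvSub ρ N),
      Submodule.span A {w : V ⧸ coinvSub ρ N | ∃ m : G, ∃ hm : m ∈ M, ∃ x ∈ s,
        w = Submodule.mapQ (coinvSub ρ N) (coinvSub ρ N) (ρ m) (hstab m hm) x} = ⊤ :=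
  statement10_general ρ P M N hdecomp hcpt hsmooth hfin hstab

end Doubling
end
end
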